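/- arXiv:1610.06975 — 5 statements merged into one kernel-verified Lean document; each statement's English description precedes it below -/
import Mathlib

section
/- For every real y and positive a, b, every derivative of order i ≥ 1 of y ↦ log(b + a e^y) is bounded in absolute value by a constant depending only on i (independent of a, b, y). -/
/-!
With `σ y = a eʸ / (b + a eʸ)`, the first derivative of `y ↦ log (b + a eʸ)` is `σ`, and `σ`
solves the logistic equation `σ' = σ - σ²`. Hence every further derivative is a polynomial
in `σ`, the same polynomial for all `a` and `b`, and it is bounded because `σ` takes values
in `[0, 1]`.
-/

open Real Polynomial

section PolynomialOfSolution

variable {𝕜 : Type*} [NontriviallyNormedField 𝕜]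

theorem iteratedDeriv_eval_comp_of_hasDerivAt {σ : 𝕜 → 𝕜} {q : 𝕜[X]}
    (hσ : ∀ y, HasDerivAt σ (q.eval (σ y)) y) (n : ℕ) (p : 𝕜[X]) :
    iteratedDeriv n (fun y => p.eval (σ y))
      = fun y => ((fun r => derivative r * q)^[n] p).eval (σ y) := by
  induction n generalizing p with
  | zero => simp
  | succ n ih =>
    have hderiv : deriv (fun y => p.eval (σ y)) = fun y => (derivative p * q).eval (σ y) := by
      ext y
      exact ((Polynomial.hasDerivAt p (σ y)).comp y (hσ y)).deriv.trans (eval_mul ..).symm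
    rw [iteratedDeriv_succ', hderiv, ih, Function.iterate_succ_apply]

end PolynomialOfSolution

noncomputable def logistic (a b y : ℝ) : ℝ := a * exp y / (b + a * exp y)

theorem logistic_mem_Icc {a b : ℝ} (ha : 0 ≤ a) (hb : 0 ≤ b) (y : ℝ) :
    logistic a b y ∈ Set.Icc 0 1 :=
  ⟨by unfold logistic; positivity,
    div_le_one_of_le₀ (le_add_of_nonneg_left hb) (by positivity)⟩

theorem hasDerivAt_log_add_mul_exp {a b y : ℝ} (hy : b + a * exp y ≠ 0) :
    HasDerivAt (fun y => log (b + a * exp y)) (logistic a b y) y :=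
  (((hasDerivAt_exp y).const_mul a).const_add b).log hy

theorem hasDerivAt_logistic {a b y : ℝ} (hy : b + a * exp y ≠ 0) :
    HasDerivAt (logistic a b) ((X - X ^ 2 : ℝ[X]).eval (logistic a b y)) y := by
  have hnum : HasDerivAt (fun y => a * exp y) (a * exp y) y := (hasDerivAt_exp y).const_mul a
  have hquot : HasDerivAt (logistic a b) _ y := hnum.div (hnum.const_add b) hy
  convert hquot using 1
  simp only [logistic, eval_sub, eval_pow, eval_X]
  field_simp

theorem iteratedDeriv_succ_log_add_mul_exp {a b : ℝ} (ha : 0 ≤ a) (hb : 0 < b) (n : ℕ) :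
    iteratedDeriv (n + 1) (fun y => log (b + a * exp y))
      = fun y => ((fun r => derivative r * (X - X ^ 2))^[n] X).eval (logistic a b y) := by
  have hne : ∀ y, b + a * exp y ≠ 0 := fun y => by positivity
  have hderiv :
      deriv (fun y => log (b + a * exp y)) = fun y => (X : ℝ[X]).eval (logistic a b y) :=
    funext fun y => by rw [(hasDerivAt_log_add_mul_exp (hne y)).deriv, eval_X]
  rw [iteratedDeriv_succ', hderiv]
  exact iteratedDeriv_eval_comp_of_hasDerivAt (fun y => hasDerivAt_logistic (hne y)) n X

theorem stmt3 (i : ℕ) (hi : 1 ≤ i) :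
    ∃ C : ℝ, ∀ a b y : ℝ, 0 < a → 0 < b →
      |iteratedDeriv i (fun y => Real.log (b + a * Real.exp y)) y| ≤ C := by
  obtain ⟨n, rfl⟩ := Nat.exists_eq_add_of_le' hi
  set p : ℝ[X] := (fun r => derivative r * (X - X ^ 2))^[n] X
  obtain ⟨C, hC⟩ := isCompact_Icc.exists_bound_of_continuousOn (p.continuous.continuousOn
    (s := Set.Icc (0 : ℝ) 1))
  refine ⟨C, fun a b y ha hb => ?_⟩
  rw [iteratedDeriv_succ_log_add_mul_exp ha.le hb n]
  exact hC _ (logistic_mem_Icc ha.le hb.le y)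
end

section
/- Let θ > 0, z_c = θ/2, and parametrize z(r) = z_c + r(-1+i) for r ≥ 0. With G(z) = log Γ(z) - log Γ(θ-z) - 2Ψ(z_c)z, one has d/dr Re(G(z(r))) ≤ -2r²/(1 + z_c + 2r)² for all r > 0. -/
noncomputable def digamma (z : ℝ) : ℝ :=
  -Real.eulerMascheroniConstant + ∑' n : ℕ, (1 / (n + 1) - 1 / (n + z))

/-!
Since `Re (log w) = log ‖w‖`, Gauss's product `Γ w = lim n ^ w n! / ∏_{j ≤ n} (w + j)` writes
`Re G(z(x))` as the limit of explicit finite sums `F_n(x)` of logarithms of quadratics in `x`.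
Their derivatives are `F_n'(x) = ∑_{j ≤ n} t(z_c + j, x) + 2 (∑_{j ≤ n} 1/(z_c + j) - log n + Ψ(z_c))`
with `t(a, x) = -4x²(a² + 2x²) / (a(a⁴ + 4x⁴))`. They converge uniformly on bounded sets, because
`|t(a, x)| ≤ 8x²/a³` and the bracket tends to `0`; hence `d/dx Re G(z(x)) = ∑_j t(z_c + j, x)`.
For `x ≥ 0` each term is at most the telescoping difference `2x²/(a + 1 + 2x)² - 2x²/(a + 2x)²`,
so the series is at most `-2x²/(z_c + 2x)²`.
-/

open Filter Topology Finset

lemma summable_one_div_nat_add_pow {c : ℝ} (hc : 0 ≤ c) {p : ℕ} (hp : 1 < p) :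
    Summable fun n : ℕ => 1 / ((n : ℝ) + c) ^ p := by
  refine ((Real.summable_one_div_nat_add_rpow c p).2 (by exact_mod_cast hp)).congr fun n => ?_
  rw [abs_of_nonneg (by positivity), Real.rpow_natCast]

lemma summable_one_div_nat_add_one_sub_one_div_nat_add {c : ℝ} (hc : 0 < c) :
    Summable fun n : ℕ => 1 / ((n : ℝ) + 1) - 1 / (n + c) := by
  set m := min 1 c
  have hm : 0 < m := lt_min one_pos hc
  refine .of_norm_bounded ((summable_one_div_nat_add_pow hm.le one_lt_two).mul_left |c - 1|)
    fun n => ?_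
  have h1 : (n : ℝ) + m ≤ n + 1 := by linarith [min_le_left 1 c]
  have h2 : (n : ℝ) + m ≤ n + c := by linarith [min_le_right 1 c]
  have hnm : 0 < (n : ℝ) + m := by positivity
  rw [Real.norm_eq_abs, div_sub_div _ _ (by positivity) (by positivity), abs_div,
    abs_of_pos (by positivity : (0 : ℝ) < (n + 1) * (n + c)), mul_one_div,
    div_le_div_iff₀ (by positivity) (by positivity)]
  calc |1 * ((n : ℝ) + c) - (n + 1) * 1| * (n + m) ^ 2 = |c - 1| * ((n + m) * (n + m)) := by
        ring_nf
    _ ≤ |c - 1| * ((n + 1) * (n + c)) := by gcongr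

lemma tendsto_sum_range_one_div_add_sub_log {c : ℝ} (hc : 0 < c) :
    Tendsto (fun n : ℕ => ∑ j ∈ range n, 1 / ((j : ℝ) + c) - Real.log n) atTop
      (𝓝 (-digamma c)) := by
  have hS := (summable_one_div_nat_add_one_sub_one_div_nat_add hc).hasSum.tendsto_sum_nat
  convert Real.tendsto_harmonic_sub_log.sub hS using 1
  · ext n
    have : (harmonic n : ℝ) = ∑ j ∈ range n, 1 / ((j : ℝ) + 1) := by simp [harmonic]
    rw [this, sum_sub_distrib]
    ring
  · rw [digamma, neg_add', neg_neg]

namespace Complex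

lemma log_norm_GammaSeq {w : ℂ} (hw : ∀ m : ℕ, w ≠ -m) {n : ℕ} (hn : n ≠ 0) :
    Real.log ‖GammaSeq w n‖
      = w.re * Real.log n + Real.log n.factorial - ∑ j ∈ range (n + 1), Real.log ‖w + j‖ := by
  have hn0 : (0 : ℝ) < n := by positivity
  have hterm : ∀ j ∈ range (n + 1), ‖w + j‖ ≠ 0 := fun j _ => by
    simpa [add_eq_zero_iff_eq_neg] using hw j
  have hpow : ‖(n : ℂ) ^ w‖ = (n : ℝ) ^ w.re := by
    rw [← ofReal_natCast, norm_cpow_eq_rpow_re_of_pos hn0]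
  have hfact : ‖(n.factorial : ℂ)‖ ≠ 0 := by simp [n.factorial_ne_zero]
  rw [GammaSeq, norm_div, norm_mul, norm_prod, hpow,
    Real.log_div (mul_ne_zero (Real.rpow_pos_of_pos hn0 _).ne' hfact) (prod_ne_zero_iff.2 hterm),
    Real.log_mul (Real.rpow_pos_of_pos hn0 _).ne' hfact, Real.log_prod hterm,
    Real.log_rpow hn0, norm_natCast]

lemma tendsto_log_norm_GammaSeq {w : ℂ} (hw : Gamma w ≠ 0) :
    Tendsto (fun n => Real.log ‖GammaSeq w n‖) atTop (𝓝 (Real.log ‖Gamma w‖)) :=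
  ((GammaSeq_tendsto_Gamma w).norm).log (norm_ne_zero_iff.2 hw)

end Complex

noncomputable def logNormRatio (a x : ℝ) : ℝ :=
  (Real.log ((a + x) ^ 2 + x ^ 2) - Real.log ((a - x) ^ 2 + x ^ 2)) / 2

lemma hasDerivAt_logNormRatio {a : ℝ} (ha : a ≠ 0) (x : ℝ) :
    HasDerivAt (logNormRatio a) (2 * a * (a ^ 2 - 2 * x ^ 2) / (a ^ 4 + 4 * x ^ 4)) x := by
  have hprod : ((a + x) ^ 2 + x ^ 2) * ((a - x) ^ 2 + x ^ 2) = a ^ 4 + 4 * x ^ 4 := by ring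
  have hpos : 0 < a ^ 4 + 4 * x ^ 4 := by positivity
  have hp : (a + x) ^ 2 + x ^ 2 ≠ 0 := left_ne_zero_of_mul (hprod ▸ hpos.ne')
  have hm : (a - x) ^ 2 + x ^ 2 ≠ 0 := right_ne_zero_of_mul (hprod ▸ hpos.ne')
  have hdp : HasDerivAt (fun y => (a + y) ^ 2 + y ^ 2) (2 * (a + x) + 2 * x) x := by
    simpa using (((hasDerivAt_id' x).const_add a).fun_pow 2).fun_add ((hasDerivAt_id' x).fun_pow 2)
  have hdm : HasDerivAt (fun y => (a - y) ^ 2 + y ^ 2) (-2 * (a - x) + 2 * x) x := by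
    simpa using (((hasDerivAt_id' x).const_sub a).fun_pow 2).fun_add ((hasDerivAt_id' x).fun_pow 2)
  refine (((hdp.log hp).sub (hdm.log hm)).div_const 2).congr_deriv ?_
  rw [← hprod]
  field_simp
  ring

-- With `a = n + z_c` and `x = r`, this is the `n`-th term of the series for `d/dr Re G(z(r))`.
noncomputable def derivSummand (a x : ℝ) : ℝ :=
  -(4 * x ^ 2 * (a ^ 2 + 2 * x ^ 2)) / (a * (a ^ 4 + 4 * x ^ 4))

lemma derivSummand_eq {a : ℝ} (ha : a ≠ 0) (x : ℝ) :
    derivSummand a x = 2 * a * (a ^ 2 - 2 * x ^ 2) / (a ^ 4 + 4 * x ^ 4) - 2 * (1 / a) := by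
  have : a ^ 4 + 4 * x ^ 4 ≠ 0 := by positivity
  rw [derivSummand]
  field_simp
  ring

lemma abs_derivSummand_le {a : ℝ} (ha : 0 < a) (x : ℝ) :
    |derivSummand a x| ≤ 8 * x ^ 2 / a ^ 3 := by
  rw [derivSummand, abs_div, abs_neg, abs_of_nonneg (by positivity), abs_of_pos (by positivity),
    div_le_div_iff₀ (by positivity) (by positivity)]
  have : a ^ 2 * (a ^ 2 + 2 * x ^ 2) ≤ 2 * (a ^ 4 + 4 * x ^ 4) := by
    nlinarith [sq_nonneg (a ^ 2 - x ^ 2), sq_nonneg (x ^ 2)]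
  calc 4 * x ^ 2 * (a ^ 2 + 2 * x ^ 2) * a ^ 3
        = (4 * x ^ 2 * a) * (a ^ 2 * (a ^ 2 + 2 * x ^ 2)) := by ring
    _ ≤ (4 * x ^ 2 * a) * (2 * (a ^ 4 + 4 * x ^ 4)) := by gcongr
    _ = 8 * x ^ 2 * (a * (a ^ 4 + 4 * x ^ 4)) := by ring

lemma summable_derivSummand {c : ℝ} (hc : 0 < c) (x : ℝ) :
    Summable fun j : ℕ => derivSummand (c + j) x := by
  refine .of_norm_bounded ((summable_one_div_nat_add_pow hc.le (p := 3) (by norm_num)).mul_left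
    (8 * x ^ 2)) fun j => ?_
  rw [Real.norm_eq_abs, mul_one_div, add_comm (j : ℝ)]
  exact abs_derivSummand_le (by positivity) x

lemma derivSummand_le {a x : ℝ} (ha : 0 < a) (hx : 0 ≤ x) :
    derivSummand a x ≤ 2 * x ^ 2 / (a + 1 + 2 * x) ^ 2 - 2 * x ^ 2 / (a + 2 * x) ^ 2 := by
  set y := a + 2 * x with hy
  have hy0 : 0 < y := by positivity
  have hsq : a ^ 4 + 4 * x ^ 4 ≤ (a ^ 2 + 2 * x ^ 2) ^ 2 := by nlinarith [sq_nonneg (a * x)]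
  have hcube : a * (a ^ 2 + 2 * x ^ 2) ≤ y ^ 3 := by
    rw [hy]
    nlinarith [mul_nonneg ha.le hx, mul_nonneg (mul_nonneg ha.le hx) hx, pow_nonneg hx 3]
  have htele : 1 / y ^ 2 - 1 / (y + 1) ^ 2 ≤ 2 / y ^ 3 := by
    rw [div_sub_div _ _ (by positivity) (by positivity),
      div_le_div_iff₀ (by positivity) (by positivity)]
    nlinarith [pow_pos hy0 3, pow_pos hy0 4]
  calc derivSummand a x ≤ -(4 * x ^ 2) / (a * (a ^ 2 + 2 * x ^ 2)) := by
        rw [derivSummand, neg_div, neg_div, neg_le_neg_iff,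
          div_le_div_iff₀ (by positivity) (by positivity)]
        nlinarith [mul_le_mul_of_nonneg_left hsq (by positivity : 0 ≤ 4 * x ^ 2 * a)]
    _ ≤ -(4 * x ^ 2) / y ^ 3 := by
        rw [neg_div, neg_div, neg_le_neg_iff]
        gcongr
    _ ≤ 2 * x ^ 2 / (a + 1 + 2 * x) ^ 2 - 2 * x ^ 2 / y ^ 2 := by
        rw [show a + 1 + 2 * x = y + 1 by rw [hy]; ring,
          show -(4 * x ^ 2) / y ^ 3 = -(2 * x ^ 2 * (2 / y ^ 3)) by ring,
          show 2 * x ^ 2 / (y + 1) ^ 2 - 2 * x ^ 2 / y ^ 2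
            = -(2 * x ^ 2 * (1 / y ^ 2 - 1 / (y + 1) ^ 2)) by ring, neg_le_neg_iff]
        gcongr

lemma tsum_derivSummand_le {c x : ℝ} (hc : 0 < c) (hx : 0 ≤ x) :
    ∑' j : ℕ, derivSummand (c + j) x ≤ -2 * x ^ 2 / (c + 2 * x) ^ 2 := by
  set g : ℕ → ℝ := fun j => 2 * x ^ 2 / (c + j + 2 * x) ^ 2
  have hg : Tendsto g atTop (𝓝 0) := by
    refine tendsto_const_nhds.div_atTop ((tendsto_pow_atTop two_ne_zero).comp ?_)
    exact tendsto_atTop_add_const_right _ _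
      (tendsto_atTop_add_const_left _ _ tendsto_natCast_atTop_atTop)
  have hpartial (N : ℕ) : ∑ j ∈ range N, derivSummand (c + j) x ≤ g N - g 0 := by
    rw [← sum_range_sub]
    refine sum_le_sum fun j _ => ?_
    simpa only [g, Nat.cast_succ, ← add_assoc] using derivSummand_le (by positivity) hx
  have := le_of_tendsto_of_tendsto' (summable_derivSummand hc x).hasSum.tendsto_sum_nat
    (hg.sub_const (g 0)) hpartial
  simpa [g, neg_div] using this

noncomputable def linePath (c x : ℝ) : ℂ := c + x * (-1 + Complex.I)

@[simp] lemma linePath_re (c x : ℝ) : (linePath c x).re = c - x := by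
  simp [linePath, sub_eq_add_neg]

@[simp] lemma linePath_im (c x : ℝ) : (linePath c x).im = x := by
  simp [linePath]

lemma two_mul_sub_linePath (c x : ℝ) : 2 * c - linePath c x = linePath c (-x) := by
  simp only [linePath]
  push_cast
  ring

lemma linePath_ne_neg_natCast {c : ℝ} (hc : 0 < c) (x : ℝ) (m : ℕ) : linePath c x ≠ -m := by
  intro h
  have him : x = 0 := by simpa using congrArg Complex.im h
  have hre : c - x = -m := by simpa using congrArg Complex.re h
  linarith [m.cast_nonneg (α := ℝ)]

lemma log_norm_linePath_add (c x : ℝ) (j : ℕ) :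
    Real.log ‖linePath c x + j‖ = Real.log ((c + j - x) ^ 2 + x ^ 2) / 2 := by
  rw [Complex.norm_eq_sqrt_sq_add_sq, Complex.add_re, Complex.add_im, linePath_re, linePath_im,
    Complex.natCast_re, Complex.natCast_im, add_zero, Real.log_sqrt (by positivity)]
  ring_nf

lemma log_norm_GammaSeq_linePath_sub {c : ℝ} (hc : 0 < c) (x : ℝ) {n : ℕ} (hn : n ≠ 0) :
    Real.log ‖Complex.GammaSeq (linePath c x) n‖
        - Real.log ‖Complex.GammaSeq (linePath c (-x)) n‖
      = -2 * x * Real.log n + ∑ j ∈ range (n + 1), logNormRatio (c + j) x := by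
  rw [Complex.log_norm_GammaSeq (linePath_ne_neg_natCast hc x) hn,
    Complex.log_norm_GammaSeq (linePath_ne_neg_natCast hc (-x)) hn]
  simp only [log_norm_linePath_add, logNormRatio, sub_div,
    sum_sub_distrib, linePath_re, sub_neg_eq_add, neg_sq]
  ring

noncomputable def reGOnPath (c x : ℝ) : ℝ :=
  (Complex.log (Complex.Gamma (linePath c x)) - Complex.log (Complex.Gamma (2 * c - linePath c x))
    - 2 * (digamma c : ℂ) * linePath c x).re

noncomputable def reGOnPathApprox (c : ℝ) (n : ℕ) (x : ℝ) : ℝ :=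
  -2 * x * Real.log n + ∑ j ∈ range (n + 1), logNormRatio (c + j) x - 2 * digamma c * (c - x)

lemma tendsto_reGOnPathApprox {c : ℝ} (hc : 0 < c) (x : ℝ) :
    Tendsto (fun n => reGOnPathApprox c n x) atTop (𝓝 (reGOnPath c x)) := by
  have hG : reGOnPath c x = Real.log ‖Complex.Gamma (linePath c x)‖
      - Real.log ‖Complex.Gamma (linePath c (-x))‖ - 2 * digamma c * (c - x) := by
    simp [reGOnPath, Complex.log_re, two_mul_sub_linePath]
  rw [hG]
  refine (((Complex.tendsto_log_norm_GammaSeq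
    (Complex.Gamma_ne_zero (linePath_ne_neg_natCast hc x))).sub
    (Complex.tendsto_log_norm_GammaSeq
      (Complex.Gamma_ne_zero (linePath_ne_neg_natCast hc (-x))))).sub_const _).congr' ?_
  filter_upwards [eventually_ne_atTop 0] with n hn
  rw [log_norm_GammaSeq_linePath_sub hc x hn, reGOnPathApprox]

lemma hasDerivAt_reGOnPathApprox {c : ℝ} (hc : 0 < c) (n : ℕ) (x : ℝ) :
    HasDerivAt (reGOnPathApprox c n) (∑ j ∈ range (n + 1), derivSummand (c + j) x
      + 2 * (∑ j ∈ range (n + 1), 1 / ((j : ℝ) + c) - Real.log n + digamma c)) x := by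
  have hsum := HasDerivAt.fun_sum (u := range (n + 1)) fun j _ =>
    hasDerivAt_logNormRatio (a := c + j) (by positivity) x
  have := ((((hasDerivAt_id' x).const_mul (-2)).mul_const (Real.log n)).add hsum).sub
    (((hasDerivAt_id' x).const_sub c).const_mul (2 * digamma c))
  refine this.congr_deriv ?_
  have hj (j : ℕ) : derivSummand (c + j) x = 2 * (c + j) * ((c + j) ^ 2 - 2 * x ^ 2)
      / ((c + j) ^ 4 + 4 * x ^ 4) - 2 * (1 / ((j : ℝ) + c)) := by
    rw [derivSummand_eq (by positivity), add_comm (j : ℝ)]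
  simp only [hj, sum_sub_distrib, ← mul_sum]
  ring

lemma tendstoUniformlyOn_deriv_reGOnPathApprox {c : ℝ} (hc : 0 < c) (R : ℝ) :
    TendstoUniformlyOn (fun n x => ∑ j ∈ range (n + 1), derivSummand (c + j) x
      + 2 * (∑ j ∈ range (n + 1), 1 / ((j : ℝ) + c) - Real.log n + digamma c))
      (fun x => ∑' j : ℕ, derivSummand (c + j) x) atTop (Metric.ball 0 R) := by
  have hseries : TendstoUniformlyOn (fun N x => ∑ j ∈ range N, derivSummand (c + j) x)
      (fun x => ∑' j : ℕ, derivSummand (c + j) x) atTop (Metric.ball 0 R) := by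
    refine tendstoUniformlyOn_tsum_nat ((summable_one_div_nat_add_pow hc.le (p := 3)
      (by norm_num)).mul_left (8 * R ^ 2)) fun j x hx => ?_
    have hxR : x ^ 2 ≤ R ^ 2 := by
      rw [mem_ball_zero_iff, Real.norm_eq_abs] at hx
      nlinarith [abs_nonneg x, sq_abs x]
    rw [Real.norm_eq_abs, mul_one_div, add_comm (j : ℝ)]
    refine (abs_derivSummand_le (by positivity) x).trans ?_
    gcongr
  have hshift : TendstoUniformlyOn (fun n x => ∑ j ∈ range (n + 1), derivSummand (c + j) x)
      (fun x => ∑' j : ℕ, derivSummand (c + j) x) atTop (Metric.ball 0 R) :=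
    fun u hu => (tendsto_add_atTop_nat 1).eventually (hseries u hu)
  have hconst : Tendsto (fun n : ℕ => 2 * (∑ j ∈ range (n + 1), 1 / ((j : ℝ) + c)
      - Real.log n + digamma c)) atTop (𝓝 0) := by
    have h := ((tendsto_sum_range_one_div_add_sub_log hc).comp (tendsto_add_atTop_nat 1)).add
      Real.tendsto_log_nat_add_one_sub_log
    have := (h.add_const (digamma c)).const_mul 2
    rw [add_zero, neg_add_cancel, mul_zero] at this
    refine this.congr fun n => ?_
    simp only [Function.comp_apply, Nat.cast_succ]
    ring
  convert hshift.add (hconst.tendstoUniformlyOn_const _) using 1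
  · rfl
  · exact funext fun x => (add_zero _).symm

theorem hasDerivAt_reGOnPath {c : ℝ} (hc : 0 < c) (x : ℝ) :
    HasDerivAt (reGOnPath c) (∑' j : ℕ, derivSummand (c + j) x) x :=
  hasDerivAt_of_tendstoUniformlyOn Metric.isOpen_ball
    (tendstoUniformlyOn_deriv_reGOnPathApprox hc (|x| + 1))
    (.of_forall fun n y _ => hasDerivAt_reGOnPathApprox hc n y)
    (fun y _ => tendsto_reGOnPathApprox hc y) (by simp)

theorem stmt8 (θ : ℝ) (hθ : 0 < θ) (G : ℂ → ℂ)
    (hG : ∀ z, G z = Complex.log (Complex.Gamma z) - Complex.log (Complex.Gamma (θ - z))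
        - 2 * (digamma (θ / 2) : ℂ) * z)
    (r : ℝ) (hr : 0 < r) :
    deriv (fun r : ℝ => (G ((θ / 2 : ℝ) + (r : ℂ) * (-1 + Complex.I))).re) r
      ≤ -2 * r ^ 2 / (1 + θ / 2 + 2 * r) ^ 2 := by
  have hc : 0 < θ / 2 := half_pos hθ
  have hθc : (θ : ℂ) = 2 * ((θ / 2 : ℝ) : ℂ) := by push_cast; ring
  have hpath : (fun r : ℝ => (G ((θ / 2 : ℝ) + (r : ℂ) * (-1 + Complex.I))).re)
      = reGOnPath (θ / 2) := by
    ext x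
    rw [hG, hθc]
    rfl
  rw [hpath, (hasDerivAt_reGOnPath hc r).deriv]
  calc ∑' j : ℕ, derivSummand (θ / 2 + j) r ≤ -2 * r ^ 2 / (θ / 2 + 2 * r) ^ 2 :=
        tsum_derivSummand_le hc hr.le
    _ ≤ -2 * r ^ 2 / (1 + θ / 2 + 2 * r) ^ 2 := by
        rw [neg_mul, neg_div, neg_div, neg_le_neg_iff]
        gcongr
        linarith
end

section
/- Let z(r) = z_c + v(r) be a smooth curve in ℂ with Re(z(r)) > 0 and Re(θ - z(r)) > 0, where z_c = θ/2. Then for G(z) = log Γ(z) - log Γ(θ-z) - 2Ψ(z_c)z, d/dr Re(G(z(r))) = 2 Σ_{n=0}^∞ [ -Re(v'(r) v(r)²)(n+z_c)² + Re(v'(r)) |v(r)|⁴ ] / [ (n+z_c) |(n+z_c)² - v(r)²|² ]. -/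
open Filter Topology Set ComplexConjugate

theorem Real.monotoneOn_deriv_log_Gamma : MonotoneOn (deriv (log ∘ Gamma)) (Ioi 0) :=
  convexOn_log_Gamma.monotoneOn_deriv fun _ hx =>
    (differentiableAt_Gamma fun m => by linarith [mem_Ioi.mp hx, (m.cast_nonneg : (0:ℝ) ≤ m)]).log
      (Gamma_pos_of_pos hx).ne'

theorem Real.summable_inv_nat_add_sq {ε : ℝ} (hε : 0 < ε) :
    Summable fun n : ℕ => (((n : ℝ) + ε) ^ 2)⁻¹ := by
  refine ((Real.summable_one_div_nat_add_rpow ε 2).mpr one_lt_two).congr fun n => ?_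
  rw [abs_of_pos (by positivity), Real.rpow_two, one_div]

namespace Complex

theorem ne_neg_natCast_of_re_pos {z : ℂ} (hz : 0 < z.re) (m : ℕ) : z ≠ -m := fun h => by
  have := congrArg re h
  simp only [neg_re, natCast_re] at this
  linarith [(m.cast_nonneg : (0:ℝ) ≤ m)]

theorem digamma_ofReal_eq_deriv_log_Gamma {x : ℝ} (hx : ∀ m : ℕ, x ≠ -m) :
    digamma x = ((deriv (Real.log ∘ Real.Gamma) x : ℝ) : ℂ) := by
  have hxC : ∀ m : ℕ, (x : ℂ) ≠ -m := fun m h => hx m (by exact_mod_cast h)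
  have hderiv : deriv Gamma x = ((deriv Real.Gamma x : ℝ) : ℂ) := by
    have hC := (differentiableAt_Gamma _ hxC).hasDerivAt.comp_ofReal
    have hR := (Real.differentiableAt_Gamma hx).hasDerivAt.ofReal_comp
    simp only [Gamma_ofReal] at hC
    exact hC.unique hR
  rw [digamma_def, logDeriv_apply, hderiv, Gamma_ofReal, Function.comp_def,
    deriv.log (Real.differentiableAt_Gamma hx) (Real.Gamma_ne_zero hx)]
  push_cast
  rfl

theorem digamma_add_nat {z : ℂ} (hz : ∀ m : ℕ, z ≠ -m) (N : ℕ) :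
    digamma (z + N) = digamma z + ∑ k ∈ Finset.range N, (z + k)⁻¹ := by
  induction N with
  | zero => simp
  | succ N ih =>
    have hzN : ∀ m : ℕ, z + N ≠ -m := fun m h =>
      hz (m + N) (by push_cast; linear_combination h)
    rw [Nat.cast_succ, ← add_assoc, digamma_apply_add_one _ hzN, ih, Finset.sum_range_succ,
      add_assoc]

theorem tendsto_digamma_add_nat_sub_digamma_nat {x : ℝ} (hx : 0 < x) :
    Tendsto (fun N : ℕ => digamma (x + N) - digamma N) atTop (𝓝 0) := by
  set ψ := deriv (Real.log ∘ Real.Gamma)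
  have hnat {y : ℝ} (hy : 0 < y) : ∀ m : ℕ, y ≠ -m := fun m => by
    linarith [(m.cast_nonneg : (0:ℝ) ≤ m)]
  have hshift {y : ℝ} (hy : 0 < y) (N : ℕ) :
      ψ (y + N) = ψ y + ∑ k ∈ Finset.range N, (y + k)⁻¹ := by
    apply ofReal_injective
    push_cast
    rw [← digamma_ofReal_eq_deriv_log_Gamma (hnat (by positivity)),
      ← digamma_ofReal_eq_deriv_log_Gamma (hnat hy),
      ← digamma_add_nat (ne_neg_natCast_of_re_pos (by simpa using hy))]
    push_cast
    rfl
  set m := ⌈x⌉₊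
  have hbounds : ∀ᶠ N : ℕ in atTop,
      0 ≤ ψ (x + N) - ψ N ∧ ψ (x + N) - ψ N ≤ ∑ k ∈ Finset.range m, ((N : ℝ) + k)⁻¹ := by
    filter_upwards [eventually_ge_atTop 1] with N hN
    have hN : (0 : ℝ) < N := by exact_mod_cast hN
    have hmono := Real.monotoneOn_deriv_log_Gamma
    refine ⟨sub_nonneg.mpr (hmono hN (by positivity : 0 < x + N) (by linarith)), ?_⟩
    rw [sub_le_iff_le_add', ← hshift hN]
    exact hmono (by positivity : 0 < x + N) (by positivity : (0 : ℝ) < N + m)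
      (by linarith [Nat.le_ceil x])
  have hupper : Tendsto (fun N : ℕ => ∑ k ∈ Finset.range m, ((N : ℝ) + k)⁻¹) atTop (𝓝 0) := by
    simpa using tendsto_finsetSum (Finset.range m) fun (k : ℕ) _ => tendsto_inv_atTop_zero.comp
      (tendsto_atTop_add_const_right _ (k : ℝ) tendsto_natCast_atTop_atTop)
  have hreal : Tendsto (fun N : ℕ => ψ (x + N) - ψ N) atTop (𝓝 0) :=
    tendsto_of_tendsto_of_tendsto_of_le_of_le' tendsto_const_nhds hupper
      (hbounds.mono fun _ h => h.1) (hbounds.mono fun _ h => h.2)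
  refine ((continuous_ofReal.tendsto 0).comp hreal).congr' ?_
  filter_upwards [eventually_ge_atTop 1] with N hN
  have hN : (0 : ℝ) < N := by exact_mod_cast hN
  rw [Function.comp_apply, ofReal_sub, ← digamma_ofReal_eq_deriv_log_Gamma (hnat hN),
    ← digamma_ofReal_eq_deriv_log_Gamma (hnat (by positivity))]
  push_cast
  rfl

theorem norm_one_div_add_one_sub_one_div_add_le {ε : ℝ} (hε : 0 < ε) (hε1 : ε ≤ 1) {w : ℂ}
    (hw : ε ≤ w.re) (n : ℕ) :
    ‖1 / ((n : ℂ) + 1) - 1 / ((n : ℂ) + w)‖ ≤ ‖w - 1‖ * (((n : ℝ) + ε) ^ 2)⁻¹ := by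
  have hle₁ : (n : ℝ) + ε ≤ ‖(n : ℂ) + 1‖ := by
    rw [show (n : ℂ) + 1 = ((n + 1 : ℝ) : ℂ) by push_cast; rfl, norm_real, Real.norm_eq_abs]
    rw [abs_of_pos (by positivity)]
    linarith
  have hle₂ : (n : ℝ) + ε ≤ ‖(n : ℂ) + w‖ :=
    (by simpa using hw : (n : ℝ) + ε ≤ ((n : ℂ) + w).re).trans (re_le_norm _)
  have hε' : 0 < (n : ℝ) + ε := by positivity
  have hne₁ : (n : ℂ) + 1 ≠ 0 := norm_pos_iff.mp (hε'.trans_le hle₁)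
  have hne₂ : (n : ℂ) + w ≠ 0 := norm_pos_iff.mp (hε'.trans_le hle₂)
  rw [div_sub_div _ _ hne₁ hne₂, show 1 * ((n : ℂ) + w) - ((n : ℂ) + 1) * 1 = w - 1 by ring,
    norm_div, norm_mul, div_eq_mul_inv, sq]
  gcongr

theorem summable_one_div_add_one_sub_one_div_add {z : ℂ} (hz : 0 < z.re) :
    Summable fun n : ℕ => 1 / ((n : ℂ) + 1) - 1 / ((n : ℂ) + z) :=
  .of_norm_bounded ((Real.summable_inv_nat_add_sq (lt_min one_pos hz)).mul_left ‖z - 1‖)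
    (norm_one_div_add_one_sub_one_div_add_le (lt_min one_pos hz) (min_le_left _ _)
      (min_le_right _ _))

theorem differentiableOn_tsum_one_div_add_one_sub_one_div_add :
    DifferentiableOn ℂ (fun z : ℂ => ∑' n : ℕ, (1 / ((n : ℂ) + 1) - 1 / ((n : ℂ) + z)))
      {z | 0 < z.re} := by
  intro z₀ hz₀
  set ρ := z₀.re / 2
  have hρ : 0 < ρ := half_pos hz₀
  have hball : ∀ w ∈ Metric.ball z₀ ρ, min 1 ρ ≤ w.re ∧ ‖w - 1‖ ≤ ‖z₀ - 1‖ + ρ := by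
    intro w hw
    rw [Metric.mem_ball, dist_eq] at hw
    have hre := (abs_le.mp ((abs_re_le_norm (w - z₀)).trans hw.le)).1
    rw [sub_re] at hre
    have hρ₀ : z₀.re = 2 * ρ := by simp only [ρ]; ring
    refine ⟨(min_le_right _ _).trans (by linarith), ?_⟩
    calc ‖w - 1‖ ≤ ‖w - z₀‖ + ‖z₀ - 1‖ := norm_sub_le_norm_sub_add_norm_sub _ _ _
      _ ≤ ‖z₀ - 1‖ + ρ := by linarith
  have hdiff : DifferentiableOn ℂ (fun z : ℂ => ∑' n : ℕ, (1 / ((n : ℂ) + 1) - 1 / ((n : ℂ) + z)))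
      (Metric.ball z₀ ρ) := by
    refine differentiableOn_tsum_of_summable_norm
      ((Real.summable_inv_nat_add_sq (lt_min one_pos hρ)).mul_left (‖z₀ - 1‖ + ρ))
      (fun n w hw => ?_) Metric.isOpen_ball fun n w hw => ?_
    · refine ((differentiableAt_const _).sub ((differentiableAt_const _).div
        (differentiableAt_const _ |>.add differentiableAt_id) ?_)).differentiableWithinAt
      intro h
      have := congrArg re h
      simp only [add_re, natCast_re, zero_re] at this
      linarith [(hball w hw).1, lt_min one_pos hρ, (n.cast_nonneg : (0:ℝ) ≤ n)]
    · refine (norm_one_div_add_one_sub_one_div_add_le (lt_min one_pos hρ) (min_le_left _ _)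
        (hball w hw).1 n).trans ?_
      gcongr
      exact (hball w hw).2
  exact (hdiff.differentiableAt (Metric.ball_mem_nhds z₀ hρ)).differentiableWithinAt

theorem hasSum_digamma_ofReal_add_eulerMascheroniConstant {x : ℝ} (hx : 0 < x) :
    HasSum (fun n : ℕ => 1 / ((n : ℂ) + 1) - 1 / ((n : ℂ) + x))
      (digamma x + Real.eulerMascheroniConstant) := by
  have hpartial (N : ℕ) : ∑ k ∈ Finset.range N, (1 / ((k : ℂ) + 1) - 1 / ((k : ℂ) + x)) =
      digamma x + Real.eulerMascheroniConstant
        - ((digamma (x + N) - digamma N) - (digamma ((1 : ℝ) + N) - digamma N)) := by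
    have h₁ := digamma_add_nat (ne_neg_natCast_of_re_pos (z := 1) one_pos) N
    have hx' := digamma_add_nat (ne_neg_natCast_of_re_pos (z := x) (by simpa using hx)) N
    rw [ofReal_one, h₁, hx', digamma_one, Finset.sum_sub_distrib]
    simp only [one_div, add_comm _ (1 : ℂ), add_comm _ (x : ℂ)]
    ring
  rw [(summable_one_div_add_one_sub_one_div_add (by simpa using hx)).hasSum_iff_tendsto_nat]
  simp only [hpartial]
  simpa using tendsto_const_nhds.sub ((tendsto_digamma_add_nat_sub_digamma_nat hx).sub
    (tendsto_digamma_add_nat_sub_digamma_nat one_pos))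

theorem hasSum_digamma_add_eulerMascheroniConstant {z : ℂ} (hz : 0 < z.re) :
    HasSum (fun n : ℕ => 1 / ((n : ℂ) + 1) - 1 / ((n : ℂ) + z))
      (digamma z + Real.eulerMascheroniConstant) := by
  set U : Set ℂ := {w | 0 < w.re}
  have hU : IsOpen U := isOpen_lt continuous_const continuous_re
  have hnat : ∀ w ∈ U, ∀ m : ℕ, w ≠ -m := fun _ hw => ne_neg_natCast_of_re_pos hw
  have hGamma : AnalyticOnNhd ℂ Gamma U :=
    DifferentiableOn.analyticOnNhd (fun w hw =>
      (differentiableAt_Gamma w (hnat w hw)).differentiableWithinAt) hU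
  have hdigamma : AnalyticOnNhd ℂ (fun w => digamma w + Real.eulerMascheroniConstant) U :=
    (hGamma.deriv.div hGamma fun w hw => Gamma_ne_zero (hnat w hw)).add analyticOnNhd_const
  have htsum := differentiableOn_tsum_one_div_add_one_sub_one_div_add.analyticOnNhd hU
  have heq := hdigamma.eqOn_of_preconnected_of_frequently_eq htsum
    (convex_halfSpace_re_gt 0).isPreconnected (z₀ := 1) (by simp [U]) ?_
  · convert (summable_one_div_add_one_sub_one_div_add hz).hasSum using 1
    exact heq hz
  have hofReal : Tendsto ofReal (𝓝[≠] (1 : ℝ)) (𝓝[≠] (1 : ℂ)) := by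
    simpa using continuous_ofReal.continuousWithinAt.tendsto_nhdsWithin
      (x := (1 : ℝ)) fun _ _ ↦ by simp_all
  refine hofReal.frequently (Eventually.frequently ?_)
  filter_upwards [nhdsWithin_le_nhds (lt_mem_nhds one_pos)] with x hx
  exact (hasSum_digamma_ofReal_add_eulerMascheroniConstant hx).tsum_eq.symm

theorem digamma_ofReal {x : ℝ} (hx : 0 < x) : digamma x = (_root_.digamma x : ℂ) := by
  have h := (hasSum_digamma_ofReal_add_eulerMascheroniConstant hx).tsum_eq
  rw [_root_.digamma, ofReal_add, ofReal_tsum]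
  push_cast
  rw [h]
  ring

theorem hasSum_digamma_add_add_digamma_sub_sub_two_mul_digamma {c u : ℂ} (hp : 0 < (c + u).re)
    (hm : 0 < (c - u).re) :
    HasSum (fun n : ℕ => -2 * u ^ 2 / (((n : ℂ) + c) * (((n : ℂ) + c) ^ 2 - u ^ 2)))
      (digamma (c + u) + digamma (c - u) - 2 * digamma c) := by
  have hc : 0 < c.re := by simp only [add_re, sub_re] at hp hm; linarith
  have h := ((hasSum_digamma_add_eulerMascheroniConstant hp).add
    (hasSum_digamma_add_eulerMascheroniConstant hm)).sub
    ((hasSum_digamma_add_eulerMascheroniConstant hc).mul_left 2)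
  rw [show ∀ a b d γ : ℂ, a + γ + (b + γ) - 2 * (d + γ) = a + b - 2 * d by intros; ring] at h
  refine h.congr_fun fun n => ?_
  have hnz {z : ℂ} (hz : 0 < z.re) : (n : ℂ) + z ≠ 0 := by
    simpa [add_eq_zero_iff_eq_neg'] using ne_neg_natCast_of_re_pos hz n
  have h₀ := hnz hc
  have h₁ := hnz hp
  have h₂ := hnz hm
  have hD : ((n : ℂ) + c) ^ 2 - u ^ 2 ≠ 0 := by
    rw [show ((n : ℂ) + c) ^ 2 - u ^ 2 = (n + (c + u)) * (n + (c - u)) by ring]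
    exact mul_ne_zero h₁ h₂
  have h1 : (n : ℂ) + 1 ≠ 0 := Nat.cast_add_one_ne_zero n
  field_simp
  ring

theorem re_mul_neg_two_mul_sq_div (a : ℝ) (w u : ℂ) :
    (w * (-2 * u ^ 2 / (a * (a ^ 2 - u ^ 2)))).re
      = 2 * ((-(w * u ^ 2).re * a ^ 2 + w.re * ‖u‖ ^ 4) / (a * ‖(a : ℂ) ^ 2 - u ^ 2‖ ^ 2)) := by
  rcases eq_or_ne a 0 with rfl | ha
  · simp
  rcases eq_or_ne ((a : ℂ) ^ 2 - u ^ 2) 0 with hD | hD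
  · simp [hD]
  have hnum : w * (-2 * u ^ 2) * (a * conj ((a : ℂ) ^ 2 - u ^ 2))
      = ((2 * a : ℝ) : ℂ) * (((-a ^ 2 : ℝ) : ℂ) * (w * u ^ 2) + ((‖u‖ ^ 4 : ℝ) : ℂ) * w) := by
    have hu : u ^ 2 * conj u ^ 2 = (‖u‖ : ℂ) ^ 4 := by
      rw [← mul_pow, mul_conj', ← pow_mul]
    simp only [map_sub, map_pow, conj_ofReal]
    push_cast
    linear_combination (2 * a * w) * hu
  have hden : (a : ℂ) * ((a : ℂ) ^ 2 - u ^ 2) * (a * conj ((a : ℂ) ^ 2 - u ^ 2))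
      = ((a ^ 2 * ‖(a : ℂ) ^ 2 - u ^ 2‖ ^ 2 : ℝ) : ℂ) := by
    rw [mul_mul_mul_comm, mul_conj']
    push_cast
    ring
  rw [← mul_div_assoc, ← mul_div_mul_right _ _ (mul_ne_zero (ofReal_ne_zero.mpr ha)
    ((map_ne_zero conj).mpr hD)), hnum, hden, div_ofReal_re, re_ofReal_mul, add_re, re_ofReal_mul,
    re_ofReal_mul]
  field_simp

end Complex

theorem HasDerivAt.log_norm {g : ℝ → ℂ} {g' : ℂ} {r : ℝ} (hg : HasDerivAt g g' r)
    (h0 : g r ≠ 0) : HasDerivAt (fun s => Real.log ‖g s‖) (g' / g r).re r := by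
  have h := (hg.norm_sq.log (pow_ne_zero 2 (norm_ne_zero_iff.mpr h0))).div_const 2
  simp only [Real.log_pow, Nat.cast_ofNat, ne_eq, OfNat.ofNat_ne_zero, not_false_eq_true,
    mul_div_cancel_left₀] at h
  refine h.congr_deriv ?_
  rw [Complex.div_re, Complex.inner, ← Complex.normSq_eq_norm_sq]
  simp only [Complex.mul_re, Complex.conj_re, Complex.conj_im]
  field_simp
  ring

theorem HasDerivAt.log_norm_Gamma {f : ℝ → ℂ} {f' : ℂ} {r : ℝ} (hf : HasDerivAt f f' r)
    (hr : ∀ m : ℕ, f r ≠ -m) :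
    HasDerivAt (fun s => Real.log ‖Complex.Gamma (f s)‖) (f' * Complex.digamma (f r)).re r := by
  have h := ((Complex.differentiableAt_Gamma _ hr).hasDerivAt.comp_of_eq r hf rfl).log_norm
    (Complex.Gamma_ne_zero hr)
  rwa [Complex.digamma_def, logDeriv_apply, mul_div_assoc', mul_comm f']

theorem stmt9 (θ : ℝ) (hθ : 0 < θ) (G : ℂ → ℂ)
    (hG : ∀ z, G z = Complex.log (Complex.Gamma z) - Complex.log (Complex.Gamma (θ - z))
        - 2 * (digamma (θ / 2) : ℂ) * z)
    (v : ℝ → ℂ) (hv : Differentiable ℝ v)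
    (hpos : ∀ r : ℝ, 0 < ((θ / 2 : ℝ) + v r).re ∧ 0 < ((θ : ℂ) - ((θ / 2 : ℝ) + v r)).re)
    (r : ℝ) :
    deriv (fun r : ℝ => (G ((θ / 2 : ℝ) + v r)).re) r
      = 2 * ∑' n : ℕ,
          (-(deriv v r * (v r) ^ 2).re * ((n : ℝ) + θ / 2) ^ 2
              + (deriv v r).re * ‖v r‖ ^ 4)
            / (((n : ℝ) + θ / 2) * ‖(((n : ℝ) + θ / 2 : ℝ) : ℂ) ^ 2 - (v r) ^ 2‖ ^ 2) := by
  set c : ℝ := θ / 2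
  have hθc : ∀ s, (θ : ℂ) - (c + v s) = c - v s := fun s => by simp only [c]; push_cast; ring
  simp only [hθc] at hpos
  have hfun : (fun s => (G (c + v s)).re) = fun s => Real.log ‖Complex.Gamma (c + v s)‖
      - Real.log ‖Complex.Gamma (c - v s)‖ - 2 * digamma c * ((c : ℂ) + v s).re := by
    funext s
    rw [hG, hθc, Complex.sub_re, Complex.sub_re, Complex.log_re, Complex.log_re,
      ← Complex.ofReal_ofNat, ← Complex.ofReal_mul, Complex.re_ofReal_mul]
  have hvr := (hv r).hasDerivAt
  have hderiv : HasDerivAt (fun s => (G (c + v s)).re) (deriv v r * (Complex.digamma (c + v r)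
      + Complex.digamma (c - v r) - 2 * Complex.digamma c)).re r := by
    have hre := (Complex.reCLM.hasFDerivAt.comp_hasDerivAt r (hvr.const_add (c : ℂ))).const_mul
      (2 * digamma c)
    rw [hfun]
    refine (((hvr.const_add (c : ℂ)).log_norm_Gamma (Complex.ne_neg_natCast_of_re_pos (hpos r).1)
      |>.sub ((hvr.const_sub (c : ℂ)).log_norm_Gamma
        (Complex.ne_neg_natCast_of_re_pos (hpos r).2))).sub hre).congr_deriv ?_
    rw [Complex.digamma_ofReal (by positivity)]
    simp only [Complex.mul_re, neg_mul, Complex.neg_re, neg_sub, Complex.reCLM_apply,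
      Complex.sub_re, Complex.add_re, Complex.re_ofNat, Complex.ofReal_re, Complex.im_ofNat,
      Complex.ofReal_im, mul_zero, sub_zero, Complex.sub_im, Complex.add_im, Complex.mul_im,
      zero_mul, add_zero]
    ring
  have hsum := Complex.hasSum_re ((Complex.hasSum_digamma_add_add_digamma_sub_sub_two_mul_digamma
    (hpos r).1 (hpos r).2).mul_left (deriv v r))
  rw [hderiv.deriv, ← hsum.tsum_eq, ← tsum_mul_left]
  refine tsum_congr fun n => ?_
  rw [show (n : ℂ) + c = ((n + c : ℝ) : ℂ) by push_cast; rfl]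
  exact Complex.re_mul_neg_two_mul_sq_div _ _ _
end

section
/- Let θ > 0, z_c = θ/2, δ̂ > 0, and parametrize w(r) = z_c + δ̂ + ir for r ≥ 0. Then for G(z) = log Γ(z) - log Γ(θ-z) - 2Ψ(z_c)z, the map r ↦ Re(G(w(r))) is nondecreasing on (0, ∞). -/
/-!
Since `θ - w(r)` is the conjugate of `θ/2 - δ + i r`, the real part of `G (w r)` is
`log |Γ(a + i r)| - log |Γ(b + i r)|` up to a constant, with `a = θ/2 + δ`, `b = θ/2 - δ`.
In Euler's product `Γ(s) = lim n^s n! / ∏_{j ≤ n} (s + j)` the ratio `|Γ(a + i r)| / |Γ(b + i r)|`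
is `lim n^(a - b) ∏_{j ≤ n} |b + j + i r| / |a + j + i r|`, and each factor is nondecreasing
in `r > 0` because `|b + j| ≤ a + j`.
-/

namespace Complex

open Filter Finset

lemma norm_GammaSeq {n : ℕ} (hn : 0 < n) (s : ℂ) :
    ‖GammaSeq s n‖ = (n : ℝ) ^ s.re * n.factorial / ∏ j ∈ range (n + 1), ‖s + j‖ := by
  rw [GammaSeq, norm_div, norm_mul, norm_prod, norm_natCast_cpow_of_pos hn, norm_natCast]

lemma norm_ofReal_add_I_mul_sq (x r : ℝ) : ‖(x : ℂ) + I * r‖ ^ 2 = x ^ 2 + r ^ 2 := by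
  rw [Complex.sq_norm, mul_comm, normSq_add_mul_I]

lemma norm_mul_norm_le_of_sq_le {p q r₁ r₂ : ℝ} (hqp : q ^ 2 ≤ p ^ 2) (hr : r₁ ^ 2 ≤ r₂ ^ 2) :
    ‖(p : ℂ) + I * r₂‖ * ‖(q : ℂ) + I * r₁‖ ≤ ‖(p : ℂ) + I * r₁‖ * ‖(q : ℂ) + I * r₂‖ := by
  refine le_of_pow_le_pow_left₀ two_ne_zero (by positivity) ?_
  simp only [mul_pow, norm_ofReal_add_I_mul_sq]
  nlinarith [mul_nonneg (sub_nonneg.2 hqp) (sub_nonneg.2 hr)]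

lemma Gamma_ofReal_add_I_mul_ne_zero (x : ℝ) {r : ℝ} (hr : r ≠ 0) :
    Gamma ((x : ℂ) + I * r) ≠ 0 :=
  Gamma_ne_zero fun m h => hr <| by simpa using congrArg im h

lemma norm_Gamma_mul_norm_Gamma_le {a b r₁ r₂ : ℝ} (hba : b ≤ a) (hab : 0 ≤ a + b)
    (hr₁ : 0 < r₁) (hr : r₁ ≤ r₂) :
    ‖Gamma ((a : ℂ) + I * r₁)‖ * ‖Gamma ((b : ℂ) + I * r₂)‖ ≤
      ‖Gamma ((a : ℂ) + I * r₂)‖ * ‖Gamma ((b : ℂ) + I * r₁)‖ := by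
  have tendsto_norm (s : ℂ) : Tendsto (fun n => ‖GammaSeq s n‖) atTop (nhds ‖Gamma s‖) :=
    (continuous_norm.tendsto _).comp (GammaSeq_tendsto_Gamma s)
  refine le_of_tendsto_of_tendsto ((tendsto_norm _).mul (tendsto_norm _))
    ((tendsto_norm _).mul (tendsto_norm _)) ?_
  filter_upwards [eventually_gt_atTop 0] with n hn
  simp only [norm_GammaSeq hn, div_mul_div_comm, ← prod_mul_distrib, add_re, ofReal_re, mul_re,
    I_re, I_im, ofReal_im, zero_mul, one_mul, sub_zero, add_zero]
  have factor_pos (x : ℝ) {r : ℝ} (hr : 0 < r) (j : ℕ) : 0 < ‖(x : ℂ) + I * r + j‖ :=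
    norm_pos_iff.2 fun h => hr.ne' (by simpa using congrArg im h)
  refine div_le_div_of_nonneg_left (by positivity)
    (prod_pos fun j _ => mul_pos (factor_pos a (hr₁.trans_le hr) j) (factor_pos b hr₁ j))
    (prod_le_prod (fun j _ => by positivity) fun j _ => ?_)
  have shift (x r : ℝ) : (x : ℂ) + I * r + j = ((x + j : ℝ) : ℂ) + I * r := by
    push_cast; ring
  rw [shift, shift, shift, shift]
  have hj : (0 : ℝ) ≤ j := j.cast_nonneg
  exact norm_mul_norm_le_of_sq_le (by nlinarith) (by nlinarith)

theorem monotoneOn_log_norm_Gamma_sub {a b : ℝ} (hba : b ≤ a) (hab : 0 ≤ a + b) :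
    MonotoneOn (fun r : ℝ => Real.log ‖Gamma ((a : ℂ) + I * r)‖ -
      Real.log ‖Gamma ((b : ℂ) + I * r)‖) (Set.Ioi 0) := by
  intro r₁ (hr₁ : 0 < r₁) r₂ (hr₂ : 0 < r₂) hr
  have hpos (x : ℝ) {r : ℝ} (hr : 0 < r) : 0 < ‖Gamma ((x : ℂ) + I * r)‖ :=
    norm_pos_iff.2 (Gamma_ofReal_add_I_mul_ne_zero x hr.ne')
  have key := Real.log_le_log (mul_pos (hpos a hr₁) (hpos b hr₂))
    (norm_Gamma_mul_norm_Gamma_le hba hab hr₁ hr)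
  rw [Real.log_mul (hpos a hr₁).ne' (hpos b hr₂).ne',
    Real.log_mul (hpos a hr₂).ne' (hpos b hr₁).ne'] at key
  dsimp only
  linarith

end Complex

theorem stmt10 (θ : ℝ) (hθ : 0 < θ) (δ : ℝ) (hδ : 0 < δ) (G : ℂ → ℂ)
    (hG : ∀ z, G z = Complex.log (Complex.Gamma z) - Complex.log (Complex.Gamma (θ - z))
        - 2 * (digamma (θ / 2) : ℂ) * z) :
    MonotoneOn (fun r : ℝ => (G ((θ / 2 + δ : ℝ) + Complex.I * (r : ℂ))).re)
      (Set.Ioi (0 : ℝ)) := by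
  have reflect (r : ℝ) : (θ : ℂ) - (((θ / 2 + δ : ℝ) : ℂ) + Complex.I * r) =
      (starRingEnd ℂ) (((θ / 2 - δ : ℝ) : ℂ) + Complex.I * r) := by
    simp only [map_add, map_mul, Complex.conj_I, Complex.conj_ofReal]
    push_cast
    ring
  have re_G (r : ℝ) : (G (((θ / 2 + δ : ℝ) : ℂ) + Complex.I * r)).re =
      (Real.log ‖Complex.Gamma (((θ / 2 + δ : ℝ) : ℂ) + Complex.I * r)‖ -
        Real.log ‖Complex.Gamma (((θ / 2 - δ : ℝ) : ℂ) + Complex.I * r)‖) -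
        2 * digamma (θ / 2) * (θ / 2 + δ) := by
    rw [hG, reflect, Complex.Gamma_conj]
    simp [Complex.log_re]
  have mono := Complex.monotoneOn_log_norm_Gamma_sub (a := θ / 2 + δ) (b := θ / 2 - δ)
    (by linarith) (by linarith)
  intro r₁ hr₁ r₂ hr₂ hr
  simp only [re_G]
  linarith [mono hr₁ hr₂ hr]
end

section
/- For the function H(r) defined by H(r) = C z_c^{-2} r^3 for r ≤ r_0 and H(r) = C(z_c^{-2} r_0^3 + z_c^{-2}(r - r_0)) for r > r_0, if a function g : [0,∞) → ℝ satisfies g(0) = 0 and g'(r) ≤ -2r²/(1 + z_c + 2r)² for all r > 0, then there exist constants C > 0 and r_0 > 0 (independent of z_c ≥ 1) such that g(r) ≤ -H(r) for all r ≥ 0. -/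
theorem stmt19 :
    ∃ C r₀ : ℝ, 0 < C ∧ 0 < r₀ ∧
      ∀ zc : ℝ, 1 ≤ zc → ∀ g g' : ℝ → ℝ,
        g 0 = 0 →
        ContinuousOn g (Set.Ici 0) →
        (∀ r : ℝ, 0 < r → HasDerivAt g (g' r) r) →
        (∀ r : ℝ, 0 < r → g' r ≤ -2 * r ^ 2 / (1 + zc + 2 * r) ^ 2) →
        ∀ r : ℝ, 0 ≤ r →
          g r ≤ -(if r ≤ r₀ then C * zc⁻¹ ^ 2 * r ^ 3
                  else C * (zc⁻¹ ^ 2 * r₀ ^ 3 + zc⁻¹ ^ 2 * (r - r₀))) := by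
  refine ⟨1/24, 1, by norm_num, by norm_num, ?_⟩
  intro zc hzc g g' hg0 hgc hgd hgb r hr
  have hz0 : (0:ℝ) < zc := lt_of_lt_of_le one_pos hzc
  set u : ℝ := zc⁻¹ with hu_def
  have hu : 0 < u := inv_pos.mpr hz0
  have huz : u * zc = 1 := inv_mul_cancel₀ (ne_of_gt hz0)
  set c : ℝ := (1/24 : ℝ) * u ^ 2 with hc_def
  have hc : 0 < c := by positivity
  -- Fact A : antitone on [0,1]
  have hA : AntitoneOn (fun x => g x + c * x ^ 3) (Set.Icc 0 1) := by
    apply antitoneOn_of_hasDerivWithinAt_nonpos (convex_Icc 0 1)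
      (f' := fun x => g' x + c * (3 * x ^ 2))
    · exact ((hgc.mono (Set.Icc_subset_Ici_self)).add
        ((continuous_const.mul (continuous_pow 3)).continuousOn))
    · intro x hx
      rw [interior_Icc] at hx
      have h1 : HasDerivAt (fun x => g x + c * x ^ 3) (g' x + c * (3 * x ^ 2)) x := by
        have hp : HasDerivAt (fun x : ℝ => x ^ 3) (3 * x ^ 2) x := by
          simpa using hasDerivAt_pow 3 x
        exact (hgd x hx.1).add (hp.const_mul c)
      exact h1.hasDerivWithinAt
    · intro x hx
      rw [interior_Icc] at hx
      obtain ⟨hx0, hx1⟩ := hx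
      have hb := hgb x hx0
      have hD : (0:ℝ) < 1 + zc + 2 * x := by linarith
      have hDle : 1 + zc + 2 * x ≤ 4 * zc := by nlinarith
      have huD : u * (1 + zc + 2 * x) ≤ 4 := by
        calc u * (1 + zc + 2 * x) ≤ u * (4 * zc) := by
              exact mul_le_mul_of_nonneg_left hDle hu.le
          _ = 4 := by rw [mul_comm (4:ℝ) zc, ← mul_assoc, huz]; ring
      have key : c * (3 * x ^ 2) ≤ 2 * x ^ 2 / (1 + zc + 2 * x) ^ 2 := by
        rw [le_div_iff₀ (by positivity)]
        have h2 : (u * (1 + zc + 2 * x)) ^ 2 ≤ 16 := by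
          have hp := mul_self_le_mul_self (mul_pos hu hD).le huD
          nlinarith
        have hxx : (0:ℝ) ≤ x ^ 2 := sq_nonneg x
        calc c * (3 * x ^ 2) * (1 + zc + 2 * x) ^ 2
            = (1/8 : ℝ) * x ^ 2 * (u * (1 + zc + 2 * x)) ^ 2 := by
              rw [hc_def]; ring
          _ ≤ (1/8 : ℝ) * x ^ 2 * 16 := by nlinarith
          _ = 2 * x ^ 2 := by ring
      have : g' x + c * (3 * x ^ 2) ≤ -2 * x ^ 2 / (1 + zc + 2 * x) ^ 2
          + 2 * x ^ 2 / (1 + zc + 2 * x) ^ 2 := add_le_add hb key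
      simpa using this.trans_eq (by ring)
  -- Fact B : antitone on [1,∞)
  have hB : AntitoneOn (fun x => g x + c * x) (Set.Ici 1) := by
    apply antitoneOn_of_hasDerivWithinAt_nonpos (convex_Ici 1)
      (f' := fun x => g' x + c)
    · exact ((hgc.mono (Set.Ici_subset_Ici.mpr (by norm_num))).add
        ((continuous_const.mul continuous_id).continuousOn))
    · intro x hx
      rw [interior_Ici] at hx
      have hx0 : (0:ℝ) < x := lt_trans one_pos hx
      have h1 : HasDerivAt (fun x => g x + c * x) (g' x + c * 1) x :=
        (hgd x hx0).add ((hasDerivAt_id x).const_mul c)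
      simpa using h1.hasDerivWithinAt
    · intro x hx
      rw [interior_Ici] at hx
      have hx0 : (0:ℝ) < x := lt_trans one_pos hx
      have hb := hgb x hx0
      have hD : (0:ℝ) < 1 + zc + 2 * x := by linarith
      have hx1 : (1:ℝ) < x := hx
      have hDle : 1 + zc + 2 * x ≤ 4 * zc * x := by
        have h1 : zc * 1 ≤ zc * x := mul_le_mul_of_nonneg_left hx1.le (le_trans zero_le_one hzc)
        have h2 : 1 * x ≤ zc * x := mul_le_mul_of_nonneg_right hzc hx0.le
        nlinarith
      have huD : u * (1 + zc + 2 * x) ≤ 4 * x := by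
        calc u * (1 + zc + 2 * x) ≤ u * (4 * zc * x) := by
              exact mul_le_mul_of_nonneg_left hDle hu.le
          _ = 4 * x := by
              have : u * (4 * zc * x) = 4 * (u * zc) * x := by ring
              rw [this, huz]; ring
      have key : c ≤ 2 * x ^ 2 / (1 + zc + 2 * x) ^ 2 := by
        rw [le_div_iff₀ (by positivity)]
        have h2 : (u * (1 + zc + 2 * x)) ^ 2 ≤ 16 * x ^ 2 := by
          have hp := mul_self_le_mul_self (mul_pos hu hD).le huD
          nlinarith
        calc c * (1 + zc + 2 * x) ^ 2
            = (1/24 : ℝ) * (u * (1 + zc + 2 * x)) ^ 2 := by rw [hc_def]; ring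
          _ ≤ (1/24 : ℝ) * (16 * x ^ 2) := by linarith
          _ ≤ 2 * x ^ 2 := by nlinarith [sq_nonneg x]
      have : g' x + c ≤ -2 * x ^ 2 / (1 + zc + 2 * x) ^ 2
          + 2 * x ^ 2 / (1 + zc + 2 * x) ^ 2 := add_le_add hb key
      simpa using this.trans_eq (by ring)
  by_cases hr1 : r ≤ 1
  · have := hA (Set.mem_Icc.mpr ⟨le_refl 0, zero_le_one⟩) (Set.mem_Icc.mpr ⟨hr, hr1⟩) hr
    simp only [hg0] at this
    rw [if_pos hr1]
    have : g r + c * r ^ 3 ≤ 0 := by simpa using this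
    rw [hc_def] at this
    linarith
  · push_neg at hr1
    have h1 := hA (Set.mem_Icc.mpr ⟨le_refl 0, zero_le_one⟩)
      (Set.mem_Icc.mpr ⟨zero_le_one, le_refl 1⟩) zero_le_one
    simp only [hg0] at h1
    have h1' : g 1 + c ≤ 0 := by simpa using h1
    have h2 := hB (Set.mem_Ici.mpr (le_refl 1)) (Set.mem_Ici.mpr hr1.le) hr1.le
    have h2' : g r + c * r ≤ g 1 + c * 1 := by simpa using h2
    rw [if_neg (not_le.mpr hr1)]
    rw [hc_def] at h1' h2'
    nlinarith
end
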